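/- arXiv:1312.7838 — 5 statements merged into one kernel-verified Lean document; each statement's English description precedes it below -/
import Mathlib

section
/- For all natural numbers m and n, the integral over [-1,1] of P_m(x) * P_n(x) dx equals (2/(2n+1)) * δ_{m,n}, where δ_{m,n} is the Kronecker delta. -/
open Polynomial intervalIntegral

/-- The Legendre polynomial, defined by Rodrigues' formula
`P_n(x) = (1/(n! * 2^n)) * dⁿ/dxⁿ [(x² - 1)ⁿ]`. -/
noncomputable def legendre (n : ℕ) : Polynomial ℝ :=
  Polynomial.C (1 / (n.factorial * 2 ^ n : ℝ)) *
    (Polynomial.derivative^[n] ((Polynomial.X ^ 2 - 1) ^ n))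

/-!
Integrating by parts `n` times against `Pₙ ∝ Dⁿ (x² - 1)ⁿ`, with no boundary terms because `±1`
are roots of order `n` of `(x² - 1)ⁿ`, gives `∫ p Pₙ = (-1)ⁿ / (n! 2ⁿ) ∫ (Dⁿ p) (x² - 1)ⁿ` for
every polynomial `p`. For `p = Pₘ` with `m < n` the derivative `Dⁿ p` vanishes, while `Dⁿ Pₙ` is
the constant `(2n)! / (n! 2ⁿ)`; and `∫₋₁¹ (x² - 1)ⁿ = (-1)ⁿ 2²ⁿ⁺¹ (n!)² / (2n+1)!` follows from the
recursion obtained by integrating the derivative of `x (x² - 1)ⁿ⁺¹`.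
-/

open Nat

namespace Polynomial

variable {R : Type*}

theorem eval_iterate_derivative_pow_eq_zero [CommSemiring R] {p : R[X]} {x : R} (hx : p.IsRoot x)
    {n k : ℕ} (hk : k < n) : (derivative^[k] (p ^ n)).eval x = 0 := by
  obtain ⟨r, hr⟩ := pow_sub_dvd_iterate_derivative_pow p n k
  rw [hr, eval_mul, eval_pow, hx.eq_zero, zero_pow (Nat.sub_ne_zero_of_lt hk), zero_mul]

theorem iterate_derivative_natDegree [Semiring R] (p : R[X]) :
    derivative^[p.natDegree] p = C (p.natDegree ! * p.leadingCoeff) := by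
  rw [eq_C_of_natDegree_le_zero ((natDegree_iterate_derivative p _).trans (Nat.sub_self _).le),
    coeff_iterate_derivative, zero_add, Nat.descFactorial_self, nsmul_eq_mul, leadingCoeff]

theorem monic_X_sq_sub_one [Ring R] : (X ^ 2 - 1 : R[X]).Monic := by
  simpa using monic_X_pow_sub_C (1 : R) two_ne_zero

theorem natDegree_X_sq_sub_one_pow [CommRing R] [Nontrivial R] (n : ℕ) :
    ((X ^ 2 - 1 : R[X]) ^ n).natDegree = 2 * n := by
  rw [monic_X_sq_sub_one.natDegree_pow, ← C_1, natDegree_X_pow_sub_C, mul_comm]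

theorem iterate_derivative_two_mul_X_sq_sub_one_pow [CommRing R] [Nontrivial R] (n : ℕ) :
    derivative^[2 * n] ((X ^ 2 - 1 : R[X]) ^ n) = C ((2 * n)! : R) := by
  rw [← natDegree_X_sq_sub_one_pow (R := R) n, iterate_derivative_natDegree,
    (monic_X_sq_sub_one.pow n).leadingCoeff, mul_one]

theorem integral_eval_mul_iterate_derivative {a b : ℝ} (p q : ℝ[X]) {k : ℕ}
    (ha : ∀ j < k, (derivative^[j] q).eval a = 0)
    (hb : ∀ j < k, (derivative^[j] q).eval b = 0) :
    ∫ x in a..b, p.eval x * (derivative^[k] q).eval x =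
      (-1) ^ k * ∫ x in a..b, (derivative^[k] p).eval x * q.eval x := by
  induction k generalizing q with
  | zero => simp
  | succ k ih =>
    have hqa : q.eval a = 0 := ha 0 k.succ_pos
    have hqb : q.eval b = 0 := hb 0 k.succ_pos
    rw [Function.iterate_succ_apply, ih (derivative q) (fun j hj => ha (j + 1) (by omega))
      (fun j hj => hb (j + 1) (by omega)), integral_mul_deriv_eq_deriv_mul
      (fun x _ => (derivative^[k] p).hasDerivAt x) (fun x _ => q.hasDerivAt x)
      ((Polynomial.continuous _).intervalIntegrable _ _)
      ((Polynomial.continuous _).intervalIntegrable _ _),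
      hqa, hqb, Function.iterate_succ_apply']
    ring

end Polynomial

theorem integral_sq_sub_one_pow_succ (n : ℕ) :
    (2 * n + 3 : ℝ) * ∫ x in (-1 : ℝ)..1, (x ^ 2 - 1) ^ (n + 1) =
      -(2 * n + 2) * ∫ x in (-1 : ℝ)..1, (x ^ 2 - 1) ^ n := by
  have hderiv (x : ℝ) : HasDerivAt (fun x : ℝ => x * (x ^ 2 - 1) ^ (n + 1))
      ((2 * n + 3) * (x ^ 2 - 1) ^ (n + 1) + (2 * n + 2) * (x ^ 2 - 1) ^ n) x := by
    refine ((hasDerivAt_id x).fun_mul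
      (((hasDerivAt_pow 2 x).sub_const 1).fun_pow (n + 1))).congr_deriv ?_
    simp only [id, Nat.add_sub_cancel]
    push_cast
    ring
  have hint (k : ℕ) :
      IntervalIntegrable (fun x : ℝ => (x ^ 2 - 1) ^ k) MeasureTheory.volume (-1) 1 :=
    (by fun_prop : Continuous fun x : ℝ => (x ^ 2 - 1) ^ k).intervalIntegrable _ _
  have hftc := integral_eq_sub_of_hasDerivAt (fun x _ => hderiv x)
    (((hint _).const_mul _).add ((hint _).const_mul _))
  rw [integral_add ((hint _).const_mul _) ((hint _).const_mul _), integral_const_mul,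
    integral_const_mul] at hftc
  norm_num at hftc
  linarith

theorem integral_sq_sub_one_pow (n : ℕ) :
    ∫ x in (-1 : ℝ)..1, (x ^ 2 - 1) ^ n =
      (-1) ^ n * 2 ^ (2 * n + 1) * (n ! : ℝ) ^ 2 / (2 * n + 1 : ℕ)! := by
  induction n with
  | zero => norm_num
  | succ n ih =>
    have hfact :
        ((2 * (n + 1) + 1 : ℕ)! : ℝ) = (2 * n + 3) * (2 * n + 2) * (2 * n + 1 : ℕ)! := by
      rw [show 2 * (n + 1) + 1 = 2 * n + 1 + 1 + 1 by ring, Nat.factorial_succ, Nat.factorial_succ]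
      push_cast
      ring
    rw [hfact, Nat.factorial_succ, Nat.cast_mul, eq_div_iff (by positivity)]
    calc _ = (2 * n + 2) * (2 * n + 1 : ℕ)! *
          ((2 * n + 3 : ℝ) * ∫ x in (-1 : ℝ)..1, (x ^ 2 - 1) ^ (n + 1)) := by ring
      _ = _ := by
        rw [integral_sq_sub_one_pow_succ, ih]
        field_simp
        push_cast
        ring

theorem integral_eval_mul_legendre (p : ℝ[X]) (n : ℕ) :
    ∫ x in (-1 : ℝ)..1, p.eval x * (legendre n).eval x =
      (-1) ^ n / (n ! * 2 ^ n) *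
        ∫ x in (-1 : ℝ)..1, (derivative^[n] p).eval x * (x ^ 2 - 1) ^ n := by
  have hroot : ∀ x : ℝ, x ^ 2 = 1 → (X ^ 2 - 1 : ℝ[X]).IsRoot x := fun x hx => by simp [hx]
  simp_rw [legendre, eval_mul, eval_C, mul_left_comm (p.eval _), integral_const_mul]
  rw [integral_eval_mul_iterate_derivative p _
    (fun j hj => eval_iterate_derivative_pow_eq_zero (hroot _ (by norm_num)) hj)
    (fun j hj => eval_iterate_derivative_pow_eq_zero (hroot _ (by norm_num)) hj)]
  simp only [eval_pow, eval_sub, eval_X, eval_one]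
  ring

theorem natDegree_legendre_le (n : ℕ) : (legendre n).natDegree ≤ n :=
  (natDegree_C_mul_le _ _).trans <| (natDegree_iterate_derivative _ _).trans <| by
    rw [natDegree_X_sq_sub_one_pow]; omega

theorem iterate_derivative_legendre (n : ℕ) :
    derivative^[n] (legendre n) = C ((2 * n)! / (n ! * 2 ^ n) : ℝ) := by
  rw [legendre, iterate_derivative_C_mul, ← Function.iterate_add_apply, ← two_mul,
    iterate_derivative_two_mul_X_sq_sub_one_pow, ← C_mul, one_div_mul_eq_div]

theorem integral_eval_mul_legendre_of_natDegree_lt {p : ℝ[X]} {n : ℕ} (hp : p.natDegree < n) :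
    ∫ x in (-1 : ℝ)..1, p.eval x * (legendre n).eval x = 0 := by
  simp [integral_eval_mul_legendre, iterate_derivative_eq_zero hp]

theorem integral_legendre_mul_self (n : ℕ) :
    ∫ x in (-1 : ℝ)..1, (legendre n).eval x * (legendre n).eval x = 2 / (2 * n + 1) := by
  rw [integral_eval_mul_legendre, iterate_derivative_legendre]
  simp_rw [eval_C]
  rw [integral_const_mul, integral_sq_sub_one_pow, Nat.factorial_succ, Nat.cast_mul]
  field_simp
  rw [pow_right_comm, neg_one_sq, one_pow]
  push_cast
  ring

theorem legendre_orthogonality (m n : ℕ) :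
    ∫ x in (-1 : ℝ)..1, (legendre m).eval x * (legendre n).eval x =
      (2 / (2 * n + 1)) * (if m = n then (1 : ℝ) else 0) := by
  rcases lt_trichotomy m n with hmn | rfl | hmn
  · rw [integral_eval_mul_legendre_of_natDegree_lt ((natDegree_legendre_le m).trans_lt hmn),
      if_neg hmn.ne, mul_zero]
  · rw [integral_legendre_mul_self, if_pos rfl, mul_one]
  · simp_rw [mul_comm ((legendre m).eval _)]
    rw [integral_eval_mul_legendre_of_natDegree_lt ((natDegree_legendre_le n).trans_lt hmn),
      if_neg hmn.ne', mul_zero]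
end

section
/- For the monomial x^n expanded as x^n = Σ_{k=0}^n C_k P_k(x) in Legendre polynomials, the coefficient C_k equals ((2k+1) * 2^{k+1} / (n+k+2)!) * (n! * ((n+k+2)/2)! / ((n-k)/2)!) when n - k is even, and C_k = 0 when n - k is odd. -/
/-!
Write `uₙ = (X² - 1)ⁿ` and `D` for the derivative. From `D u_{k+2} = 2(k+2) X u_{k+1}` and
`D² u_{k+2} = 2(k+2) ((2k+3) u_{k+1} + 2(k+1) u_k)`, differentiated `k + 1` resp. `k` more times,
one eliminates `Dᵏ u_{k+1}` and gets Bonnet's recurrence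
`(2k+1) X Pₖ = (k+1) P_{k+1} + k P_{k-1}`.
Multiplying the claimed expansion of `Xⁿ` by `X` and applying Bonnet's recurrence yields the
claimed expansion of `X^{n+1}`, because the closed-form coefficients satisfy the resulting
three-term recurrence. The expansion is unique since `Pₖ` has degree `k`.
-/

open Polynomial intervalIntegral

section Rodrigues

variable {R : Type*} [CommRing R]

lemma derivative_X_sq_sub_one_pow_succ (m : ℕ) :
    derivative ((X ^ 2 - 1 : R[X]) ^ (m + 1)) = (2 * (m + 1) : R) • (X * (X ^ 2 - 1) ^ m) := by
  rw [derivative_pow_succ, smul_eq_C_mul]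
  simp only [derivative_sub, derivative_X_pow, derivative_one, map_add, map_mul, map_natCast,
    map_one, map_ofNat]
  push_cast
  ring

lemma iterate_derivative_X_sq_sub_one_pow_succ_eq_X_mul (m : ℕ) :
    derivative^[m + 1] ((X ^ 2 - 1 : R[X]) ^ (m + 1)) =
      (2 * (m + 1) : R) • (X * derivative^[m] ((X ^ 2 - 1) ^ m) +
        (m : R) • derivative^[m - 1] ((X ^ 2 - 1) ^ m)) := by
  rw [Function.iterate_succ_apply, derivative_X_sq_sub_one_pow_succ, iterate_derivative_smul,
    mul_comm X, iterate_derivative_mul_X, Nat.cast_smul_eq_nsmul, mul_comm X]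

lemma derivative_derivative_X_sq_sub_one_pow_add_two (k : ℕ) :
    derivative (derivative ((X ^ 2 - 1 : R[X]) ^ (k + 2))) =
      (2 * (k + 2) : R) • ((2 * k + 3 : R) • (X ^ 2 - 1) ^ (k + 1) +
        (2 * (k + 1) : R) • (X ^ 2 - 1) ^ k) := by
  rw [derivative_X_sq_sub_one_pow_succ, derivative_smul, derivative_mul, derivative_X,
    derivative_X_sq_sub_one_pow_succ]
  simp only [smul_eq_C_mul, map_add, map_mul, map_natCast, map_ofNat, map_one]
  push_cast
  ring

lemma iterate_derivative_X_sq_sub_one_pow_add_two_eq_iterate (k : ℕ) :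
    derivative^[k + 2] ((X ^ 2 - 1 : R[X]) ^ (k + 2)) =
      (2 * (k + 2) : R) • ((2 * k + 3 : R) • derivative^[k] ((X ^ 2 - 1) ^ (k + 1)) +
        (2 * (k + 1) : R) • derivative^[k] ((X ^ 2 - 1) ^ k)) := by
  rw [Function.iterate_add_apply, Function.iterate_succ_apply, Function.iterate_one,
    derivative_derivative_X_sq_sub_one_pow_add_two, iterate_derivative_smul, iterate_map_add,
    iterate_derivative_smul, iterate_derivative_smul]

lemma iterate_derivative_X_sq_sub_one_pow_add_two [IsDomain R] [CharZero R] (k : ℕ) :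
    derivative^[k + 2] ((X ^ 2 - 1 : R[X]) ^ (k + 2)) =
      (2 * (2 * k + 3) : R) • (X * derivative^[k + 1] ((X ^ 2 - 1) ^ (k + 1))) -
        (4 * (k + 1) ^ 2 : R) • derivative^[k] ((X ^ 2 - 1) ^ k) := by
  have hX := iterate_derivative_X_sq_sub_one_pow_succ_eq_X_mul (R := R) (k + 1)
  have hD2 := iterate_derivative_X_sq_sub_one_pow_add_two_eq_iterate (R := R) k
  rw [Nat.add_sub_cancel] at hX
  push_cast at hX
  have hk : (k + 2 : R) ≠ 0 := by exact_mod_cast (k + 1).succ_ne_zero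
  apply smul_right_injective R[X] hk
  linear_combination (norm := module) (2 * k + 3 : R) • hX - (k + 1 : R) • hD2

end Rodrigues

open Nat in
lemma iterate_derivative_X_sq_sub_one_pow_eq_smul_legendre (n : ℕ) :
    derivative^[n] ((X ^ 2 - 1 : ℝ[X]) ^ n) = (n ! * 2 ^ n : ℝ) • legendre n := by
  rw [legendre, ← smul_eq_C_mul, smul_smul, mul_one_div_cancel (by positivity), one_smul]

lemma legendre_zero : legendre 0 = 1 := by
  simp [legendre]

lemma legendre_one : legendre 1 = X := by
  simp only [legendre, Function.iterate_one, pow_one, derivative_sub, derivative_X_sq,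
    derivative_one, sub_zero]
  rw [← mul_assoc, ← C_mul]
  norm_num

lemma smul_X_mul_legendre (k : ℕ) :
    (2 * k + 1 : ℝ) • (X * legendre k) =
      (k + 1 : ℝ) • legendre (k + 1) + (k : ℝ) • legendre (k - 1) := by
  rcases k with _ | k
  · simp [legendre_zero, legendre_one]
  have h := iterate_derivative_X_sq_sub_one_pow_add_two (R := ℝ) k
  simp only [iterate_derivative_X_sq_sub_one_pow_eq_smul_legendre, mul_smul_comm,
    Nat.factorial_succ] at h
  push_cast at h ⊢
  have hs : ((k + 1) * k.factorial * 2 ^ (k + 1) * 2 : ℝ) ≠ 0 := by positivity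
  apply smul_right_injective ℝ[X] hs
  linear_combination (norm := module) -h

lemma X_mul_legendre (k : ℕ) :
    X * legendre k =
      ((k + 1) / (2 * k + 1) : ℝ) • legendre (k + 1) +
        (k / (2 * k + 1) : ℝ) • legendre (k - 1) := by
  have hk : (2 * k + 1 : ℝ) ≠ 0 := by positivity
  rw [← inv_smul_smul₀ hk (X * legendre k), smul_X_mul_legendre, smul_add, smul_smul, smul_smul,
    inv_mul_eq_div, inv_mul_eq_div]

lemma degree_iterate_derivative_X_sq_sub_one_pow {R : Type*} [CommRing R] [CharZero R] (n : ℕ) :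
    (derivative^[n] ((X ^ 2 - 1 : R[X]) ^ n)).degree = n := by
  have hmonic : (X ^ 2 - 1 : R[X]).Monic := by
    simpa only [C_1] using monic_X_pow_sub_C (1 : R) two_ne_zero
  have hdeg : ((X ^ 2 - 1 : R[X]) ^ n).natDegree = n + n := by
    rw [hmonic.natDegree_pow, show (X ^ 2 - 1 : R[X]) = X ^ 2 - C 1 by rw [C_1],
      natDegree_X_pow_sub_C]
    ring
  apply degree_eq_of_le_of_coeff_ne_zero
  · exact degree_le_of_natDegree_le ((natDegree_iterate_derivative _ n).trans (by omega))
  · rw [coeff_iterate_derivative, ← hdeg, (hmonic.pow n).coeff_natDegree, nsmul_one, hdeg]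
    exact Nat.cast_ne_zero.mpr (Nat.descFactorial_pos.mpr (by omega)).ne'

lemma degree_legendre (n : ℕ) : (legendre n).degree = n := by
  rw [legendre, degree_C_mul (by positivity), degree_iterate_derivative_X_sq_sub_one_pow]

lemma linearIndependent_legendre : LinearIndependent ℝ legendre :=
  (⟨legendre, degree_legendre⟩ : Polynomial.Sequence ℝ).linearIndependent

open Nat in
/-- The coefficient of `Pₖ` in the expansion of `X ^ (k + 2 * t)`. -/
noncomputable def legendreCoeff (k t : ℕ) : ℝ :=
  (2 * k + 1) * 2 ^ (k + 1) * (k + 2 * t)! * (k + t + 1)! / ((2 * k + 2 * t + 2)! * t !)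

lemma legendreCoeff_eq_mul_succ_left (k t : ℕ) :
    legendreCoeff k t =
      (2 * k + 1) * (2 * k + 2 * t + 3) / ((2 * k + 3) * (k + 2 * t + 1)) *
        legendreCoeff (k + 1) t := by
  rw [legendreCoeff, legendreCoeff, show k + 1 + 2 * t = (k + 2 * t) + 1 by ring,
    show k + 1 + t + 1 = (k + t + 1) + 1 by ring,
    show 2 * (k + 1) + 2 * t + 2 = (2 * k + 2 * t + 2) + 1 + 1 by ring]
  simp only [Nat.factorial_succ]
  push_cast
  field_simp
  ring

lemma legendreCoeff_succ_left_eq_mul_succ_right (k t : ℕ) :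
    legendreCoeff (k + 1) t =
      2 * (t + 1) * (2 * k + 3) / ((2 * k + 1) * (k + 2 * t + 2)) * legendreCoeff k (t + 1) := by
  rw [legendreCoeff, legendreCoeff, show k + 1 + 2 * t = (k + 2 * t) + 1 by ring,
    show k + 2 * (t + 1) = (k + 2 * t) + 1 + 1 by ring,
    show k + 1 + t + 1 = (k + t + 1) + 1 by ring, show k + (t + 1) + 1 = (k + t + 1) + 1 by ring,
    show 2 * (k + 1) + 2 * t + 2 = (2 * k + 2 * t + 2) + 1 + 1 by ring,
    show 2 * k + 2 * (t + 1) + 2 = (2 * k + 2 * t + 2) + 1 + 1 by ring]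
  simp only [Nat.factorial_succ]
  push_cast
  field_simp
  ring

open Nat in
/-- The coefficient of `Pₖ` in the expansion of `Xⁿ`; the guard `k ≤ n` is needed because
`n - k` truncates. -/
noncomputable def legendreCoeffOfXPow (n k : ℕ) : ℝ :=
  if k ≤ n ∧ Even (n - k) then
    ((2 * k + 1) * 2 ^ (k + 1) / ((n + k + 2)! : ℝ)) *
      ((n ! : ℝ) * (((n + k + 2) / 2)! : ℝ) / (((n - k) / 2)! : ℝ))
  else 0

lemma legendreCoeffOfXPow_of_eq {n k t : ℕ} (h : n = k + 2 * t) :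
    legendreCoeffOfXPow n k = legendreCoeff k t := by
  subst h
  rw [legendreCoeffOfXPow, if_pos ⟨by omega, t, by omega⟩,
    show (k + 2 * t + k + 2) / 2 = k + t + 1 by omega, show (k + 2 * t - k) / 2 = t by omega,
    show k + 2 * t + k + 2 = 2 * k + 2 * t + 2 by ring, legendreCoeff]
  ring

lemma legendreCoeffOfXPow_eq_zero {n k : ℕ} (h : ¬∃ t, n = k + 2 * t) :
    legendreCoeffOfXPow n k = 0 :=
  if_neg fun ⟨hk, t, ht⟩ ↦ h ⟨t, by omega⟩

-- At `j = 0` the truncated `j - 1` is harmless: its factor `j / (2 * j - 1)` vanishes.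
lemma legendreCoeffOfXPow_succ (n j : ℕ) :
    legendreCoeffOfXPow (n + 1) j =
      j / (2 * j - 1) * legendreCoeffOfXPow n (j - 1) +
        (j + 1) / (2 * j + 3) * legendreCoeffOfXPow n (j + 1) := by
  by_cases h : ∃ t, n + 1 = j + 2 * t
  · obtain ⟨t, ht⟩ := h
    rw [legendreCoeffOfXPow_of_eq ht]
    rcases j with _ | k <;> rcases t with _ | t
    · omega
    · rw [legendreCoeffOfXPow_of_eq (k := 1) (t := t) (by omega),
        legendreCoeff_succ_left_eq_mul_succ_right 0 t]
      push_cast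
      field_simp
      ring
    · rw [Nat.add_sub_cancel, legendreCoeffOfXPow_of_eq (k := k) (t := 0) (by omega),
        legendreCoeffOfXPow_eq_zero (k := k + 1 + 1) (by omega),
        legendreCoeff_eq_mul_succ_left k 0]
      push_cast
      rw [show 2 * ((k : ℝ) + 1) - 1 = 2 * k + 1 by ring]
      field_simp
      ring
    · rw [Nat.add_sub_cancel, legendreCoeffOfXPow_of_eq (k := k) (t := t + 1) (by omega),
        legendreCoeffOfXPow_of_eq (k := k + 1 + 1) (t := t) (by omega),
        legendreCoeff_eq_mul_succ_left k (t + 1),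
        legendreCoeff_succ_left_eq_mul_succ_right (k + 1) t]
      push_cast
      rw [show 2 * ((k : ℝ) + 1) - 1 = 2 * k + 1 by ring]
      field_simp
      ring
  · rw [legendreCoeffOfXPow_eq_zero h,
      legendreCoeffOfXPow_eq_zero (k := j + 1) fun ⟨t, ht⟩ ↦ h ⟨t + 1, by omega⟩]
    rcases j with _ | k
    · simp
    · rw [Nat.add_sub_cancel,
        legendreCoeffOfXPow_eq_zero (k := k) fun ⟨t, ht⟩ ↦ h ⟨t, by omega⟩]
      simp

lemma X_mul_sum_smul_legendre (n : ℕ) (f : ℕ → ℝ) (hf : ∀ k, n < k → f k = 0) :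
    X * ∑ k ∈ Finset.range (n + 1), f k • legendre k =
      ∑ k ∈ Finset.range (n + 2),
        (k / (2 * k - 1) * f (k - 1) + (k + 1) / (2 * k + 3) * f (k + 1) : ℝ) • legendre k := by
  simp only [Finset.mul_sum, mul_smul_comm, X_mul_legendre, smul_add, smul_smul, add_smul,
    Finset.sum_add_distrib]
  congr 1
  · rw [Finset.sum_range_succ' _ (n + 1)]
    simp only [Nat.cast_zero, zero_div, zero_mul, zero_smul, add_zero, Nat.add_sub_cancel]
    refine Finset.sum_congr rfl fun k _ ↦ ?_
    congr 1
    push_cast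
    ring
  · rw [Finset.sum_range_succ', Finset.sum_range_succ _ (n + 1), Finset.sum_range_succ _ n,
      hf (n + 1) (by omega), hf (n + 2) (by omega)]
    simp only [Nat.cast_zero, zero_div, mul_zero, zero_smul, add_zero, Nat.add_sub_cancel]
    refine Finset.sum_congr rfl fun k _ ↦ ?_
    congr 1
    push_cast
    ring

lemma X_pow_eq_sum_smul_legendre (n : ℕ) :
    (X ^ n : ℝ[X]) = ∑ k ∈ Finset.range (n + 1), legendreCoeffOfXPow n k • legendre k := by
  induction n with
  | zero => simp [legendre_zero, legendreCoeffOfXPow]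
  | succ n ih =>
    rw [pow_succ', ih,
      X_mul_sum_smul_legendre n _ fun k hk ↦ legendreCoeffOfXPow_eq_zero (by omega)]
    simp only [legendreCoeffOfXPow_succ]

theorem legendre_coeff_of_monomial (n : ℕ) (c : ℕ → ℝ)
    (h : (Polynomial.X ^ n : Polynomial ℝ) = ∑ k ∈ Finset.range (n + 1), c k • legendre k) :
    ∀ k ≤ n,
      (Even ((n : ℤ) - k) →
        c k = ((2 * k + 1) * 2 ^ (k + 1) / ((n + k + 2).factorial : ℝ)) *
          ((n.factorial : ℝ) * (((n + k + 2) / 2).factorial : ℝ) /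
            (((n - k) / 2).factorial : ℝ))) ∧
      (¬ Even ((n : ℤ) - k) → c k = 0) := by
  intro k hk
  have hc : c k = legendreCoeffOfXPow n k :=
    linearIndependent_iff'ₛ.mp linearIndependent_legendre _ _ _
      (h.symm.trans (X_pow_eq_sum_smul_legendre n)) k (Finset.mem_range.mpr (by omega))
  have heven : Even ((n : ℤ) - k) ↔ Even (n - k) := by
    rw [← Nat.cast_sub hk, Int.even_coe_nat]
  rw [hc, heven, legendreCoeffOfXPow]
  exact ⟨fun he ↦ if_pos ⟨hk, he⟩, fun ho ↦ if_neg fun h ↦ ho h.2⟩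
end

section
/- For every natural number n, Σ_{k=0}^n B_k(x) B_{n-k}(x) = (2/(n+2)) Σ_{l=0}^{n-2} C(n+2, l) B_{n-l} B_l(x) + (n+1) B_n(x), as an identity of polynomials. -/
/-!
Write `T n` for the left side and `R n` for the right side. Both satisfy `(T (n+1))' = (n+2) T n`:
for `T` this is the Appell property `B_k' = k B_{k-1}` applied to a convolution, for `R` it comes
from `(l+1) C(n+3, l+1) = (n+3) C(n+2, l)`. Hence if `T n = R n`, then `T (n+1) - R (n+1)` is a
constant `c` and `T (n+2) - R (n+2) = (n+3) c x + d`. As `B_k(1) - B_k(0)` is `1` for `k = 1` and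
`0` otherwise, both `T m` and `R m` increase by `2 B_{m-1}` over `[0, 1]` when `m ≥ 3`; so `c = 0`.
The identity for `n = 0, 1` is checked directly.
-/

open Polynomial Finset

theorem Finset.Nat.sum_antidiagonal_succ_ite_fst_eq_one {M : Type*} [AddCommMonoid M]
    (f : ℕ → M) (m : ℕ) :
    ∑ x ∈ antidiagonal (m + 1), (if x.1 = 1 then f x.2 else 0) = f m := by
  rw [sum_eq_single (1, m) (fun x hx hne => if_neg fun h1 => hne (Prod.ext h1 ?_))
    (by simp [add_comm])]
  · simp
  · rw [HasAntidiagonal.mem_antidiagonal] at hx; simp only; omega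

namespace Polynomial

variable {R : Type*}

theorem eval_one_sub_eval_zero_of_derivative_eq_C [CommRing R] [IsAddTorsionFree R]
    {q : R[X]} {c : R} (h : derivative q = C c) : q.eval 1 - q.eval 0 = c := by
  have h' : derivative (q - C c * X) = 0 := by simp [h]
  have hq : q = C c * X + C ((q - C c * X).coeff 0) := by
    rw [← eq_C_of_derivative_eq_zero h']; ring
  rw [hq]; simp

theorem eq_zero_of_derivative_succ_eq_smul [CommRing R] [IsDomain R] [CharZero R]
    (P : ℕ → R[X]) (a : ℕ → R) (ha : ∀ n, a n ≠ 0)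
    (hD : ∀ n, derivative (P (n + 1)) = a n • P n)
    (hends : ∀ n, (P (n + 2)).eval 1 = (P (n + 2)).eval 0) (h0 : P 0 = 0) :
    ∀ n, P n = 0 := by
  intro n
  induction n with
  | zero => exact h0
  | succ n ih =>
    obtain ⟨c, hconst⟩ : ∃ c, P (n + 1) = C c :=
      ⟨_, eq_C_of_derivative_eq_zero (by rw [hD, ih, smul_zero])⟩
    have hc : (P (n + 2)).eval 1 - (P (n + 2)).eval 0 = a (n + 1) * c :=
      eval_one_sub_eval_zero_of_derivative_eq_C (by rw [hD, hconst, smul_C, smul_eq_mul])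
    rw [hends, sub_self, eq_comm] at hc
    rw [hconst, (mul_eq_zero.1 hc).resolve_left (ha _), C_0]

theorem derivative_sum_antidiagonal_mul [CommSemiring R] (p : ℕ → R[X])
    (hp : ∀ n, derivative (p n) = n * p (n - 1)) (n : ℕ) :
    derivative (∑ x ∈ antidiagonal (n + 1), p x.1 * p x.2) =
      (n + 2 : R[X]) * ∑ x ∈ antidiagonal n, p x.1 * p x.2 := by
  simp only [derivative_sum, derivative_mul, hp, sum_add_distrib]
  rw [Nat.sum_antidiagonal_succ, Nat.sum_antidiagonal_succ']
  simp only [Nat.cast_zero, zero_mul, mul_zero, zero_add, add_tsub_cancel_right, mul_sum,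
    ← sum_add_distrib]
  refine sum_congr rfl fun x hx => ?_
  rw [← mem_antidiagonal.1 hx]
  push_cast
  ring

theorem bernoulli_eval_one_eq (n : ℕ) :
    (bernoulli n).eval 1 = _root_.bernoulli n + if n = 1 then 1 else 0 := by
  rw [bernoulli_eval_one]
  split_ifs with h
  · subst h; rw [bernoulli'_one, _root_.bernoulli_one]; norm_num
  · rw [bernoulli_eq_bernoulli'_of_ne_one h, add_zero]

noncomputable def bernoulliConv (n : ℕ) : ℚ[X] :=
  ∑ x ∈ antidiagonal n, bernoulli x.1 * bernoulli x.2

noncomputable def bernoulliBinomialConv (n : ℕ) : ℚ[X] :=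
  ∑ l ∈ range (n - 1), ((n + 2).choose l * _root_.bernoulli (n - l) : ℚ) • bernoulli l

theorem derivative_bernoulliConv (n : ℕ) :
    derivative (bernoulliConv (n + 1)) = (n + 2 : ℚ) • bernoulliConv n := by
  rw [bernoulliConv, derivative_sum_antidiagonal_mul _ derivative_bernoulli, smul_eq_C_mul,
    bernoulliConv, map_add, map_natCast, map_ofNat]

theorem derivative_bernoulliBinomialConv (n : ℕ) :
    derivative (bernoulliBinomialConv (n + 1)) = (n + 3 : ℚ) • bernoulliBinomialConv n := by
  cases n with
  | zero => simp [bernoulliBinomialConv]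
  | succ m =>
    simp only [bernoulliBinomialConv, derivative_sum, derivative_smul, derivative_bernoulli,
      add_tsub_cancel_right, smul_sum]
    rw [sum_range_succ']
    simp only [Nat.cast_zero, zero_mul, smul_zero, add_zero, smul_smul]
    refine sum_congr rfl fun l hl => ?_
    have hchoose := congr(($(Nat.add_one_mul_choose_eq (m + 3) l) : ℚ))
    rw [show m + 1 + 1 - (l + 1) = m + 1 - l by omega, add_tsub_cancel_right,
      ← Nat.cast_smul_eq_nsmul ℚ (l + 1) (bernoulli l) |>.trans (nsmul_eq_mul _ _), smul_smul]
    congr 1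
    push_cast at hchoose ⊢
    linear_combination (-_root_.bernoulli (m + 1 - l)) * hchoose

theorem eval_one_sub_eval_zero_bernoulliConv (n : ℕ) :
    (bernoulliConv (n + 3)).eval 1 - (bernoulliConv (n + 3)).eval 0 =
      2 * _root_.bernoulli (n + 2) := by
  have hfst (f : ℕ → ℚ) :
      ∑ x ∈ antidiagonal (n + 3), (if x.1 = 1 then 1 else 0) * f x.2 = f (n + 2) := by
    simp only [ite_mul, one_mul, zero_mul]
    exact Nat.sum_antidiagonal_succ_ite_fst_eq_one f (n + 2)
  have hsnd := Nat.sum_antidiagonal_swap (n := n + 3)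
    (f := fun x => (if x.1 = 1 then 1 else 0) * _root_.bernoulli x.2)
  simp only [Prod.fst_swap, Prod.snd_swap] at hsnd
  simp only [bernoulliConv, eval_finsetSum, eval_mul, bernoulli_eval_one_eq, bernoulli_eval_zero,
    ← sum_sub_distrib]
  calc _ = ∑ x ∈ antidiagonal (n + 3), ((if x.1 = 1 then 1 else 0) * _root_.bernoulli x.2 +
          (if x.2 = 1 then 1 else 0) * _root_.bernoulli x.1 +
          (if x.1 = 1 then 1 else 0) * (if x.2 = 1 then 1 else 0)) :=
        sum_congr rfl fun _ _ => by ring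
    _ = _ := by
      rw [sum_add_distrib, sum_add_distrib, hsnd, hfst, hfst (fun k => if k = 1 then 1 else 0)]
      simp; ring

theorem eval_one_sub_eval_zero_bernoulliBinomialConv (n : ℕ) :
    (bernoulliBinomialConv (n + 3)).eval 1 - (bernoulliBinomialConv (n + 3)).eval 0 =
      (n + 5) * _root_.bernoulli (n + 2) := by
  simp only [bernoulliBinomialConv, eval_finsetSum, eval_smul, bernoulli_eval_one_eq,
    bernoulli_eval_zero, ← sum_sub_distrib, smul_eq_mul, mul_add, add_sub_cancel_left,
    mul_ite, mul_one, mul_zero, sum_ite_eq']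
  rw [if_pos (mem_range.2 (by omega)), Nat.choose_one_right]
  push_cast
  ring

noncomputable def bernoulliConvClosedForm (n : ℕ) : ℚ[X] :=
  ((2 : ℚ) / (n + 2)) • bernoulliBinomialConv n + ((n : ℚ) + 1) • bernoulli n

theorem derivative_bernoulliConvClosedForm (n : ℕ) :
    derivative (bernoulliConvClosedForm (n + 1)) = (n + 2 : ℚ) • bernoulliConvClosedForm n := by
  simp only [bernoulliConvClosedForm, derivative_add, derivative_smul,
    derivative_bernoulliBinomialConv, derivative_bernoulli, add_tsub_cancel_right]
  rw [← Nat.cast_smul_eq_nsmul ℚ (n + 1) (bernoulli n) |>.trans (nsmul_eq_mul _ _)]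
  match_scalars <;> field_simp <;> ring

theorem eval_one_sub_eval_zero_bernoulliConvClosedForm (n : ℕ) :
    (bernoulliConvClosedForm (n + 3)).eval 1 - (bernoulliConvClosedForm (n + 3)).eval 0 =
      2 * _root_.bernoulli (n + 2) := by
  have h := eval_one_sub_eval_zero_bernoulliBinomialConv n
  simp only [bernoulliConvClosedForm, eval_add, eval_smul, bernoulli_eval_one_eq,
    bernoulli_eval_zero, smul_eq_mul]
  rw [if_neg (by omega), add_zero, add_sub_add_right_eq_sub, ← mul_sub, h]
  push_cast
  field_simp
  ring

theorem bernoulliConv_succ_eq_bernoulliConvClosedForm (n : ℕ) :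
    bernoulliConv (n + 1) = bernoulliConvClosedForm (n + 1) := by
  refine sub_eq_zero.1 <| eq_zero_of_derivative_succ_eq_smul
    (fun m => bernoulliConv (m + 1) - bernoulliConvClosedForm (m + 1)) (fun m => (m + 3 : ℚ))
    (fun m => by positivity) (fun m => ?_) (fun m => ?_) ?_ n
  · rw [derivative_sub, derivative_bernoulliConv, derivative_bernoulliConvClosedForm, ← smul_sub]
    congr 1
    push_cast
    ring
  · rw [eval_sub, eval_sub, show m + 2 + 1 = m + 3 from rfl]
    linear_combination eval_one_sub_eval_zero_bernoulliConv m -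
      eval_one_sub_eval_zero_bernoulliConvClosedForm m
  · simp [bernoulliConv, bernoulliConvClosedForm, bernoulliBinomialConv, Nat.sum_antidiagonal_succ,
      smul_eq_C_mul]
    ring

end Polynomial

theorem bernoulli_convolution (n : ℕ) :
    ∑ k ∈ Finset.range (n + 1),
        Polynomial.bernoulli k * Polynomial.bernoulli (n - k) =
      ((2 : ℚ) / (n + 2)) •
          ∑ l ∈ Finset.range (n - 1),
            (((n + 2).choose l : ℚ) * _root_.bernoulli (n - l)) • Polynomial.bernoulli l +
        ((n : ℚ) + 1) • Polynomial.bernoulli n := by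
  cases n with
  | zero => simp
  | succ n =>
    rw [← Nat.sum_antidiagonal_eq_sum_range_succ
      (fun i j => Polynomial.bernoulli i * Polynomial.bernoulli j)]
    exact bernoulliConv_succ_eq_bernoulliConvClosedForm n
end

section
/- For every natural number n, Σ_{k=0}^n E_k(x) E_{n-k}(x) = -(4/(n+2)) Σ_{l=0}^{n} C(n+2, l) E_{n-l+1} B_l(x), as an identity of polynomials, where E_m = E_m(0) denotes the Euler polynomial evaluated at 0 and B_l(x) is the Bernoulli polynomial. -/
/-!
Both sides, viewed as sequences `P n` of polynomials, satisfy `(P (n + 1))' = (n + 2) • P n`: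
the convolution because `E_k' = k E_{k-1}`, the right side because `B_l' = l B_{l-1}`. They also
have the same increment `P (n + 1)(1) - P (n + 1)(0) = -4 E_{n+1}(0)`, which follows from
`E_k(1) + E_k(0) = 2 · 0^k` and `B_l(1) - B_l(0) = [l = 1]`, and they agree at `n = 0`.
Such a sequence is unique: if the difference `D` vanishes at `n`, then `D (n + 1)` is a
constant `c`, and the increment of `D (n + 2)`, whose derivative is `(n + 3) c`, forces `c = 0`.
-/
open Polynomial

/-- The Euler polynomials, defined by the generating function `2 e^{xt}/(e^t + 1)`,
via the equivalent recurrence `E_n(x) = x^n - (1/2) ∑_{k<n} C(n,k) E_k(x)`. -/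
noncomputable def eulerPoly : ℕ → Polynomial ℚ
  | n =>
    Polynomial.X ^ n -
      Polynomial.C (1 / 2) *
        ∑ k ∈ (Finset.range n).attach,
          Polynomial.C (n.choose k.1 : ℚ) * eulerPoly k.1
  decreasing_by exact Finset.mem_range.mp k.2

open Finset

theorem Polynomial.eval_one_sub_eval_zero_of_derivative_eq_C_s15 {R : Type*} [Ring R]
    [IsAddTorsionFree R] {p : R[X]} {c : R} (hp : derivative p = C c) :
    p.eval 1 - p.eval 0 = c := by
  have hconst := eq_C_of_derivative_eq_zero (p := p - C c * X) (by simp [hp])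
  have h1 := congrArg (eval 1) hconst
  have h0 := congrArg (eval 0) hconst
  simp only [eval_sub, eval_mul_X, eval_C, mul_one, mul_zero, sub_zero] at h1 h0
  rw [h0, ← h1, sub_sub_cancel]

theorem Polynomial.eq_zero_of_derivative_succ_eq_smul_of_eval_one_eq_eval_zero {K : Type*}
    [Field K] [CharZero K] (D : ℕ → K[X]) (a : ℕ → K) (ha : ∀ n, a n ≠ 0) (h0 : D 0 = 0)
    (hD : ∀ n, derivative (D (n + 1)) = a n • D n)
    (heval : ∀ n, (D (n + 1)).eval 1 = (D (n + 1)).eval 0) (n : ℕ) : D n = 0 := by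
  induction n with
  | zero => exact h0
  | succ n ih =>
    obtain ⟨c, hc⟩ : ∃ c, D (n + 1) = C c :=
      ⟨_, eq_C_of_derivative_eq_zero (by rw [hD, ih, smul_zero])⟩
    have hac : a (n + 1) * c = 0 := by
      rw [← sub_eq_zero.mpr (heval (n + 1))]
      exact (eval_one_sub_eval_zero_of_derivative_eq_C_s15 (by rw [hD, hc, smul_C, smul_eq_mul])).symm
    rw [hc, (mul_eq_zero.mp hac).resolve_left (ha _), C_0]

theorem Polynomial.derivative_sum_range_mul_sub {R : Type*} [CommSemiring R] (p : ℕ → R[X])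
    (h0 : derivative (p 0) = 0) (hp : ∀ k, derivative (p (k + 1)) = (k + 1) • p k) (n : ℕ) :
    derivative (∑ k ∈ range (n + 2), p k * p (n + 1 - k)) =
      (n + 2) • ∑ k ∈ range (n + 1), p k * p (n - k) := by
  have hleft : ∑ k ∈ range (n + 2), derivative (p k) * p (n + 1 - k) =
      ∑ k ∈ range (n + 1), (k + 1) • (p k * p (n - k)) := by
    rw [sum_range_succ', h0, zero_mul, add_zero]
    refine sum_congr rfl fun k _ => ?_
    rw [hp, Nat.add_sub_add_right, smul_mul_assoc]
  have hright : ∑ k ∈ range (n + 2), p k * derivative (p (n + 1 - k)) =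
      ∑ k ∈ range (n + 1), (n - k + 1) • (p k * p (n - k)) := by
    rw [sum_range_succ, Nat.sub_self, h0, mul_zero, add_zero]
    refine sum_congr rfl fun k hk => ?_
    rw [Nat.sub_add_comm (Nat.lt_succ_iff.mp (mem_range.mp hk)), hp, mul_smul_comm]
  rw [derivative_sum]
  simp only [derivative_mul]
  rw [sum_add_distrib, hleft, hright, ← sum_add_distrib, smul_sum]
  refine sum_congr rfl fun k hk => ?_
  rw [← add_smul]
  congr 1
  have := mem_range.mp hk
  omega

theorem Polynomial.derivative_sum_range_choose_mul_smul_bernoulli (a : ℕ → ℚ) (m n : ℕ) :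
    derivative (∑ l ∈ range (n + 2), ((m + 1).choose l * a (n + 1 - l)) • bernoulli l) =
      ((m : ℚ) + 1) • ∑ l ∈ range (n + 1), (m.choose l * a (n - l)) • bernoulli l := by
  rw [derivative_sum, sum_range_succ', derivative_smul, bernoulli_zero, derivative_one, smul_zero,
    add_zero, smul_sum]
  refine sum_congr rfl fun l _ => ?_
  rw [derivative_smul, derivative_bernoulli_add_one, Nat.add_sub_add_right, smul_smul,
    ← C_eq_natCast, ← C_1, ← C_add, ← smul_eq_C_mul, smul_smul]
  congr 1
  have := congrArg (fun k : ℕ => (k : ℚ)) (Nat.add_one_mul_choose_eq m l)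
  push_cast at this
  linear_combination -a (n - l) * this

theorem Polynomial.eval_one_sub_eval_zero_sum_smul_bernoulli {s : Finset ℕ} (hs : 1 ∈ s)
    (c : ℕ → ℚ) :
    (∑ l ∈ s, c l • bernoulli l).eval 1 - (∑ l ∈ s, c l • bernoulli l).eval 0 = c 1 := by
  have hstep (l : ℕ) : (bernoulli l).eval 1 - (bernoulli l).eval 0 = if l = 1 then 1 else 0 := by
    rw [← add_zero (1 : ℚ), bernoulli_eval_one_add, add_sub_cancel_left]
    rcases l with _ | _ | l <;> simp
  simp only [eval_finsetSum, eval_smul, smul_eq_mul, ← sum_sub_distrib, ← mul_sub, hstep,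
    mul_ite, mul_one, mul_zero, sum_ite_eq', if_pos hs]

theorem eulerPoly_eq (n : ℕ) :
    eulerPoly n = X ^ n - (1 / 2 : ℚ) • ∑ k ∈ range n, n.choose k • eulerPoly k := by
  rw [eulerPoly, sum_attach (range n) fun k => C (n.choose k : ℚ) * eulerPoly k, smul_eq_C_mul]
  simp only [nsmul_eq_mul, C_eq_natCast]

theorem eulerPoly_zero : eulerPoly 0 = 1 := by
  simp [eulerPoly_eq 0]

theorem derivative_eulerPoly_succ (n : ℕ) :
    derivative (eulerPoly (n + 1)) = (n + 1) • eulerPoly n := by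
  induction n using Nat.strong_induction_on with
  | _ n ih =>
    rw [eulerPoly_eq (n + 1), derivative_sub, derivative_X_pow, derivative_smul, derivative_sum,
      sum_range_succ', eulerPoly_zero, derivative_smul, derivative_one, smul_zero, add_zero,
      eulerPoly_eq n, smul_sub, smul_comm (n + 1) (1 / 2 : ℚ),
      smul_sum (r := n + 1)]
    congr 1
    · simp [nsmul_eq_mul]
    · congr 1
      refine sum_congr rfl fun k hk => ?_
      rw [derivative_smul, ih k (mem_range.mp hk), smul_smul, smul_smul,
        ← Nat.add_one_mul_choose_eq]

theorem eulerPoly_eval_one_add_eval_zero (n : ℕ) :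
    (eulerPoly n).eval 1 + (eulerPoly n).eval 0 = 2 * 0 ^ n := by
  induction n using Nat.strong_induction_on with
  | _ n ih =>
    have hbinom : ∑ k ∈ range n, (n.choose k : ℚ) * 0 ^ k = 1 - 0 ^ n := by
      have := (add_pow (0 : ℚ) 1 n).symm
      simp only [one_pow, mul_one, zero_add, sum_range_succ, Nat.choose_self, Nat.cast_one,
        mul_comm] at this
      linear_combination this
    have hsum : ∑ k ∈ range n, (n.choose k : ℚ) * (eulerPoly k).eval 1 +
        ∑ k ∈ range n, (n.choose k : ℚ) * (eulerPoly k).eval 0 = 2 * (1 - 0 ^ n) := by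
      rw [← sum_add_distrib, ← hbinom, mul_sum]
      refine sum_congr rfl fun k hk => ?_
      rw [← mul_add, ih k (mem_range.mp hk)]
      ring
    rw [eulerPoly_eq n]
    simp only [eval_sub, eval_smul, eval_pow, eval_X, eval_finsetSum, nsmul_eq_mul, smul_eq_mul,
      one_pow, eval_mul, eval_natCast]
    linear_combination (-1 / 2 : ℚ) * hsum

noncomputable def eulerConv (n : ℕ) : ℚ[X] :=
  ∑ k ∈ range (n + 1), eulerPoly k * eulerPoly (n - k)

noncomputable def eulerBernoulliSum (n : ℕ) : ℚ[X] :=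
  (-(4 : ℚ) / (n + 2)) • ∑ l ∈ range (n + 1),
    (((n + 2).choose l : ℚ) * (eulerPoly (n - l + 1)).eval 0) • Polynomial.bernoulli l

theorem eulerConv_eval_one_sub_eval_zero (n : ℕ) :
    (eulerConv (n + 1)).eval 1 - (eulerConv (n + 1)).eval 0 = -4 * (eulerPoly (n + 1)).eval 0 := by
  have heval_one (k : ℕ) : (eulerPoly k).eval 1 = 2 * 0 ^ k - (eulerPoly k).eval 0 :=
    eq_sub_of_add_eq (eulerPoly_eval_one_add_eval_zero k)
  simp only [eulerConv, eval_finsetSum, eval_mul, heval_one, ← sum_sub_distrib]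
  set e : ℕ → ℚ := fun k => (eulerPoly k).eval 0
  -- only the terms `k = 0` and `k = n + 1` of the cross sums survive
  have hfirst : ∑ k ∈ range (n + 2), (0 : ℚ) ^ k * e (n + 1 - k) = e (n + 1) := by
    rw [sum_eq_single_of_mem 0 (by simp) fun k _ hk => by rw [zero_pow hk, zero_mul]]
    simp
  have hlast : ∑ k ∈ range (n + 2), e k * (0 : ℚ) ^ (n + 1 - k) = e (n + 1) := by
    rw [sum_eq_single_of_mem (n + 1) (by simp) fun k hk hne => by
      rw [zero_pow (by have := mem_range.mp hk; omega), mul_zero]]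
    simp
  have hcross : ∀ k ∈ range (n + 2), (0 : ℚ) ^ k * 0 ^ (n + 1 - k) = 0 := fun k hk => by
    rw [← pow_add, Nat.add_sub_cancel' (Nat.lt_succ_iff.mp (mem_range.mp hk)),
      zero_pow n.succ_ne_zero]
  calc ∑ k ∈ range (n + 2), ((2 * 0 ^ k - e k) * (2 * 0 ^ (n + 1 - k) - e (n + 1 - k)) -
          e k * e (n + 1 - k))
      = ∑ k ∈ range (n + 2), (4 * (0 ^ k * 0 ^ (n + 1 - k)) - 2 * (0 ^ k * e (n + 1 - k)) -
          2 * (e k * 0 ^ (n + 1 - k))) := sum_congr rfl fun _ _ => by ring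
    _ = -4 * e (n + 1) := by
      rw [sum_sub_distrib, sum_sub_distrib, ← mul_sum, ← mul_sum, ← mul_sum, sum_eq_zero hcross,
        hfirst, hlast]
      ring

theorem eulerConv_zero_eq_eulerBernoulliSum_zero : eulerConv 0 = eulerBernoulliSum 0 := by
  simp [eulerConv, eulerBernoulliSum, eulerPoly_eq 1, eulerPoly_zero,
    ← Nat.cast_smul_eq_nsmul ℚ, smul_smul]
  norm_num

theorem derivative_eulerConv_succ (n : ℕ) :
    derivative (eulerConv (n + 1)) = ((n : ℚ) + 2) • eulerConv n := by
  rw [eulerConv, eulerConv, ← Nat.cast_two, ← Nat.cast_add, Nat.cast_smul_eq_nsmul]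
  exact derivative_sum_range_mul_sub eulerPoly (by rw [eulerPoly_zero, derivative_one])
    derivative_eulerPoly_succ n

theorem derivative_eulerBernoulliSum_succ (n : ℕ) :
    derivative (eulerBernoulliSum (n + 1)) = ((n : ℚ) + 2) • eulerBernoulliSum n := by
  rw [eulerBernoulliSum, eulerBernoulliSum, derivative_smul]
  erw [derivative_sum_range_choose_mul_smul_bernoulli (fun j => (eulerPoly (j + 1)).eval 0)
    (n + 2) n]
  rw [smul_smul, smul_smul]
  congr 1
  push_cast
  field_simp
  ring

theorem eulerBernoulliSum_eval_one_sub_eval_zero (n : ℕ) :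
    (eulerBernoulliSum (n + 1)).eval 1 - (eulerBernoulliSum (n + 1)).eval 0 =
      -4 * (eulerPoly (n + 1)).eval 0 := by
  have hR := eval_one_sub_eval_zero_sum_smul_bernoulli (s := range (n + 1 + 1)) (by simp)
    fun l => ((n + 1 + 2).choose l : ℚ) * (eulerPoly (n + 1 - l + 1)).eval 0
  simp only [Nat.choose_one_right, Nat.add_sub_cancel] at hR
  rw [eulerBernoulliSum, eval_smul, eval_smul, smul_eq_mul, smul_eq_mul, ← mul_sub, hR]
  push_cast
  field_simp

theorem euler_convolution (n : ℕ) :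
    ∑ k ∈ Finset.range (n + 1), eulerPoly k * eulerPoly (n - k) =
      (-(4 : ℚ) / (n + 2)) •
        ∑ l ∈ Finset.range (n + 1),
          (((n + 2).choose l : ℚ) * (eulerPoly (n - l + 1)).eval 0) •
            Polynomial.bernoulli l := by
  refine sub_eq_zero.mp <| eq_zero_of_derivative_succ_eq_smul_of_eval_one_eq_eval_zero
    (fun k => eulerConv k - eulerBernoulliSum k) (fun k => (k : ℚ) + 2) (fun k => by positivity)
    (sub_eq_zero.mpr eulerConv_zero_eq_eulerBernoulliSum_zero) (fun m => ?_) (fun m => ?_) n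
  · rw [derivative_sub, derivative_eulerConv_succ, derivative_eulerBernoulliSum_succ, smul_sub]
  · rw [eval_sub, eval_sub, sub_eq_sub_iff_sub_eq_sub, eulerConv_eval_one_sub_eval_zero,
      eulerBernoulliSum_eval_one_sub_eval_zero]
end

section
/- For natural numbers j, k with j ≥ k and j - k even, ((2k+1)/(k! 2^{k+1})) ∫_{-1}^{1} (d^k/dx^k (x^2-1)^k) x^j dx = (2^{k+2} k + 2^{k+1}) * j! * ((j+k+2)/2)! / ( ((j-k)/2)! * (j+k+2)! ). -/
open Polynomial intervalIntegral

lemma iter_deriv_factor (k : ℕ) : ∀ m, m ≤ k →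
    ∃ r : Polynomial ℝ, Polynomial.derivative^[m] ((X ^ 2 - 1) ^ k) = (X ^ 2 - 1) ^ (k - m) * r := by
  intro m
  induction m with
  | zero => exact fun _ => ⟨1, by simp⟩
  | succ m ih =>
    intro h
    obtain ⟨r, hr⟩ := ih (Nat.le_of_succ_le h)
    refine ⟨C ((k - m : ℕ) : ℝ) * (2 * X) * r + (X ^ 2 - 1) * derivative r, ?_⟩
    rw [Function.iterate_succ_apply', hr]
    have hk : k - m = (k - (m + 1)) + 1 := by omega
    rw [hk]
    simp only [derivative_mul, derivative_pow, derivative_sub, derivative_one,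
      derivative_X_pow, derivative_X, Nat.cast_add, Nat.cast_one, Nat.add_sub_cancel, map_add,
      map_mul, map_natCast, map_ofNat, map_one, sub_zero, mul_one]
    ring

lemma eval_zero_of_lt (k m : ℕ) (h : m < k) (x : ℝ) (hx : x ^ 2 = 1) :
    (Polynomial.derivative^[m] ((X ^ 2 - 1) ^ k)).eval x = 0 := by
  obtain ⟨r, hr⟩ := iter_deriv_factor k m h.le
  obtain ⟨t, ht⟩ : ∃ t, k - m = t + 1 := ⟨k - m - 1, by omega⟩
  rw [hr, ht]
  have : x * x - 1 = 0 := by nlinarith [hx]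
  simp [pow_succ, this]

lemma byparts (p : Polynomial ℝ) (n : ℕ) (h1 : p.eval 1 = 0) (h2 : p.eval (-1) = 0) :
    ∫ x in (-1:ℝ)..1, (derivative p).eval x * x ^ (n + 1) =
      -((n : ℝ) + 1) * ∫ x in (-1:ℝ)..1, p.eval x * x ^ n := by
  have hu : ∀ x ∈ Set.uIcc (-1:ℝ) 1, HasDerivAt (fun y => p.eval y) ((derivative p).eval x) x :=
    fun x _ => p.hasDerivAt x
  have hv : ∀ x ∈ Set.uIcc (-1:ℝ) 1, HasDerivAt (fun y : ℝ => y ^ (n + 1)) (((n : ℝ) + 1) * x ^ n) x := by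
    intro x _
    simpa using hasDerivAt_pow (n + 1) x
  have hi1 : IntervalIntegrable (fun x => (derivative p).eval x) MeasureTheory.volume (-1) 1 :=
    ((derivative p).continuous).intervalIntegrable _ _
  have hi2 : IntervalIntegrable (fun x : ℝ => ((n : ℝ) + 1) * x ^ n) MeasureTheory.volume (-1) 1 :=
    (continuous_const.mul (continuous_pow n)).intervalIntegrable _ _
  have key := intervalIntegral.integral_mul_deriv_eq_deriv_mul hu hv hi1 hi2
  have h3 : ∫ x in (-1:ℝ)..1, p.eval x * (((n : ℝ) + 1) * x ^ n) =
      ((n : ℝ) + 1) * ∫ x in (-1:ℝ)..1, p.eval x * x ^ n := by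
    simp_rw [show ∀ x : ℝ, p.eval x * (((n : ℝ) + 1) * x ^ n) = ((n : ℝ) + 1) * (p.eval x * x ^ n)
      from fun x => by ring]
    exact intervalIntegral.integral_const_mul _ _
  rw [h3, h1, h2] at key
  linarith [key]


lemma Jval : ∀ k m : ℕ, (∫ x in (-1:ℝ)..1, (((X:Polynomial ℝ) ^ 2 - 1) ^ k).eval x * x ^ (2 * m)) =
    (-1) ^ k * 2 ^ (2 * k + 1) * k.factorial * (k + m).factorial * (2 * m).factorial /
      (m.factorial * (2 * k + 2 * m + 1).factorial) := by
  intro k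
  induction k with
  | zero =>
    intro m
    simp only [pow_zero, eval_one, one_mul]
    rw [integral_pow]
    have h1 : ((-1:ℝ)) ^ (2 * m + 1) = -1 := by
      rw [pow_succ, pow_mul]; norm_num
    rw [h1]
    norm_num
    have h2 : (2 * m + 1).factorial = (2 * m + 1) * (2 * m).factorial := Nat.factorial_succ _
    rw [h2]
    have hm : (m.factorial : ℝ) ≠ 0 := Nat.cast_ne_zero.2 m.factorial_ne_zero
    have h2m : ((2 * m).factorial : ℝ) ≠ 0 := Nat.cast_ne_zero.2 (2 * m).factorial_ne_zero
    have h2m1 : ((2 * m : ℕ) : ℝ) + 1 ≠ 0 := by positivity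
    field_simp
    push_cast
    ring
  | succ k ih =>
    intro m
    -- by parts: ∫ (X²-1)^{k+1} x^{2m} = -(1/(2m+1)) ∫ D((X²-1)^{k+1}) x^{2m+1}
    have hb := byparts ((X ^ 2 - 1 : Polynomial ℝ) ^ (k + 1)) (2 * m) (by simp) (by norm_num)
    -- derivative ((X²-1)^(k+1)) eval
    have hder : ∀ x : ℝ, (derivative ((X ^ 2 - 1 : Polynomial ℝ) ^ (k + 1))).eval x * x ^ (2 * m + 1)
        = (2 * ((k:ℝ) + 1)) * ((((X:Polynomial ℝ) ^ 2 - 1) ^ k).eval x * x ^ (2 * (m + 1))) := by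
      intro x
      rw [derivative_pow]
      simp [derivative_X_pow]
      ring
    have h4 : (∫ x in (-1:ℝ)..1, (derivative ((X ^ 2 - 1 : Polynomial ℝ) ^ (k + 1))).eval x * x ^ (2 * m + 1))
        = (2 * ((k:ℝ) + 1)) * ∫ x in (-1:ℝ)..1, (((X:Polynomial ℝ) ^ 2 - 1) ^ k).eval x * x ^ (2 * (m + 1)) := by
      simp_rw [hder]
      exact intervalIntegral.integral_const_mul _ _
    rw [h4, ih (m + 1)] at hb
    -- hb : (2(k+1)) * J(k, m+1) = -(2m+1) * J(k+1, m)
    have h2m1 : ((2 * m : ℕ) : ℝ) + 1 ≠ 0 := by positivity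
    have goal : (∫ x in (-1:ℝ)..1, (((X:Polynomial ℝ) ^ 2 - 1) ^ (k+1)).eval x * x ^ (2 * m))
        = -(2 * ((k:ℝ) + 1) / (((2*m : ℕ):ℝ) + 1)) *
          ((-1) ^ k * 2 ^ (2 * k + 1) * k.factorial * (k + (m+1)).factorial * (2 * (m+1)).factorial /
            ((m+1).factorial * (2 * k + 2 * (m+1) + 1).factorial)) := by
      field_simp at hb ⊢
      linarith [hb]
    rw [goal]
    -- now pure factorial algebra
    have e1 : (k + 1 + m).factorial = (k + (m + 1)).factorial := by ring_nf
    have e2 : (2 * (k+1) + 2 * m + 1) = (2 * k + 2 * (m + 1) + 1) := by ring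
    rw [e2, ← e1]
    have f1 : (2 * (m + 1)).factorial = (2*m+2) * ((2*m+1) * (2*m).factorial) := by
      have : 2 * (m+1) = (2*m+1) + 1 := by ring
      rw [this, Nat.factorial_succ, Nat.factorial_succ]
    have f2 : (m+1).factorial = (m+1) * m.factorial := Nat.factorial_succ _
    have f3 : (k + 1).factorial = (k + 1) * k.factorial := Nat.factorial_succ _
    rw [f1, f2, f3]
    have hm : (m.factorial : ℝ) ≠ 0 := Nat.cast_ne_zero.2 m.factorial_ne_zero
    have hf : (((2*k+2*(m+1)+1).factorial : ℕ) : ℝ) ≠ 0 := Nat.cast_ne_zero.2 (Nat.factorial_ne_zero _)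
    have hm1 : ((m:ℝ) + 1) ≠ 0 := by positivity
    field_simp
    push_cast
    ring


lemma parts (k p : ℕ) : ∀ m, m ≤ k →
    (∫ x in (-1:ℝ)..1, (Polynomial.derivative^[m] ((X ^ 2 - 1) ^ k)).eval x * x ^ (p + m)) =
      (-1) ^ m * ((p + m).factorial : ℝ) / (p.factorial : ℝ) *
        ∫ x in (-1:ℝ)..1, (((X:Polynomial ℝ) ^ 2 - 1) ^ k).eval x * x ^ p := by
  intro m
  induction m with
  | zero =>
    intro _
    have hp : (p.factorial : ℝ) ≠ 0 := Nat.cast_ne_zero.2 p.factorial_ne_zero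
    simp [div_self hp]
  | succ m ih =>
    intro h
    have hm : m < k := h
    have hb := byparts (Polynomial.derivative^[m] ((X ^ 2 - 1) ^ k)) (p + m)
      (eval_zero_of_lt k m hm 1 (by norm_num)) (eval_zero_of_lt k m hm (-1) (by norm_num))
    rw [← Function.iterate_succ_apply' derivative m] at hb
    have hpm : p + (m + 1) = (p + m) + 1 := by ring
    rw [hpm, hb, ih hm.le]
    have f1 : (p + m + 1).factorial = (p + m + 1) * (p + m).factorial := Nat.factorial_succ _
    rw [f1]
    have hp : (p.factorial : ℝ) ≠ 0 := Nat.cast_ne_zero.2 p.factorial_ne_zero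
    field_simp
    push_cast
    ring


theorem legendre_coeff_of_monomial_formula (j k : ℕ) (hjk : k ≤ j)
    (hpar : Even ((j : ℤ) - (k : ℤ))) :
    ((2 * k + 1 : ℝ) / (k.factorial * 2 ^ (k + 1))) *
        ∫ x in (-1 : ℝ)..1,
          (Polynomial.derivative^[k] ((Polynomial.X ^ 2 - 1) ^ k)).eval x * x ^ j =
      (2 ^ (k + 2) * k + 2 ^ (k + 1) : ℝ) * (j.factorial : ℝ) *
          (((j + k + 2) / 2).factorial : ℝ) /
          ((((j - k) / 2).factorial : ℝ) * ((j + k + 2).factorial : ℝ)) := by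
  obtain ⟨r, hr⟩ := hpar
  obtain ⟨m, hm⟩ : ∃ m, j = 2 * m + k := ⟨(j - k) / 2, by omega⟩
  subst hm
  rw [show (2 * m + k + k + 2) / 2 = k + m + 1 from by omega,
      show (2 * m + k - k) / 2 = m from by omega,
      show (2 * m + k + k + 2) = (2 * k + 2 * m + 1) + 1 from by omega,
      parts k (2 * m) k le_rfl, Jval k m]
  rw [Nat.factorial_succ (2 * k + 2 * m + 1), Nat.factorial_succ (k + m)]
  have hneg : ((-1:ℝ)) ^ k * (-1) ^ k = 1 := by rw [← mul_pow]; norm_num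
  have h1 : (k.factorial : ℝ) ≠ 0 := Nat.cast_ne_zero.2 k.factorial_ne_zero
  have h2 : (m.factorial : ℝ) ≠ 0 := Nat.cast_ne_zero.2 m.factorial_ne_zero
  have h3 : ((2 * m).factorial : ℝ) ≠ 0 := Nat.cast_ne_zero.2 (2 * m).factorial_ne_zero
  have h4 : (((2 * k + 2 * m + 1).factorial : ℕ) : ℝ) ≠ 0 :=
    Nat.cast_ne_zero.2 (Nat.factorial_ne_zero _)
  have hneg2 : ((-1:ℝ)) ^ (k * 2) = 1 := by rw [pow_mul']; norm_num
  field_simp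
  ring_nf
  simp only [hneg2]
  push_cast
  ring
end
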